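/- Let c ∈ ℝ^d with c_1 ≥ ... ≥ c_d ≥ 0, β > 0, and let k* be such that c_{k*+1} < t_{k*} ≤ c_{k*}, where t_k = (1/k)(∑_{i=1}^k c_i − β). Define z*_i = t_{k*} for i ≤ k*, z*_i = c_i for i > k*, μ* = 0, μ̂*_i = c_i − t_{k*} for i ≤ k* and μ̂*_i = 0 otherwise. Then (z*, t_{k*}, μ*, μ̂*) satisfies the KKT conditions: z* − c − μ* + μ̂* = 0, β = ∑_j μ̂*_j, μ*_j ≥ 0, z*_j ≥ 0, μ*_j z*_j = 0, μ̂*_j ≥ 0, z*_j ≤ t_{k*}, and μ̂*_j (z*_j − t_{k*}) = 0 for all j. -/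

import Mathlib

open Finset

theorem Fin.sum_ite_val_lt_sub_const {M : Type*} [AddCommGroup M] {d k : ℕ} (hk : k ≤ d)
    (c : Fin d → M) (t : M) :
    (∑ i : Fin d, if i.val < k then c i - t else 0) =
      (∑ i : Fin d, if i.val < k then c i else 0) - k • t := by
  have hcount : (∑ i : Fin d, if i.val < k then t else 0) = k • t := by
    rw [← sum_filter, Finset.sum_const, Fin.card_filter_val_lt, min_eq_right hk]
  rw [← hcount, ← sum_sub_distrib]
  exact sum_congr rfl fun i _ => by split_ifs <;> simp

/-- verification of the KKT conditions for the point built from the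
threshold `t_{k*} = (1/k*)(∑_{i=1}^{k*} c_i − β)` (0-based indexing: entries `i < k`). -/
theorem stmt4 {d : ℕ} (c : Fin d → ℝ) (β : ℝ)
    (hmono : ∀ i j : Fin d, i ≤ j → c j ≤ c i) (hnonneg : ∀ i, 0 ≤ c i)
    (k : ℕ) (hk1 : 1 ≤ k) (hkd : k < d)
    (t : ℝ) (ht : t = ((∑ i : Fin d, if i.val < k then c i else 0) - β) / k)
    (hlt : c ⟨k, hkd⟩ < t) (hle : t ≤ c ⟨k - 1, by omega⟩)
    (z μ μhat : Fin d → ℝ)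
    (hz : z = fun i => if i.val < k then t else c i)
    (hμ : μ = fun _ => 0)
    (hμhat : μhat = fun i => if i.val < k then c i - t else 0) :
    (∀ j, z j - c j - μ j + μhat j = 0) ∧
    β = ∑ j, μhat j ∧
    (∀ j, 0 ≤ μ j) ∧ (∀ j, 0 ≤ z j) ∧ (∀ j, μ j * z j = 0) ∧
    (∀ j, 0 ≤ μhat j) ∧ (∀ j, z j ≤ t) ∧ (∀ j, μhat j * (z j - t) = 0) := by
  subst hz hμ hμhat
  have hkt : k * t = (∑ i : Fin d, if i.val < k then c i else 0) - β := by
    rw [ht, mul_div_cancel₀ _ (Nat.cast_ne_zero.mpr (by omega))]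
  have hsum : β = ∑ j : Fin d, if j.val < k then c j - t else 0 := by
    rw [Fin.sum_ite_val_lt_sub_const hkd.le, nsmul_eq_mul, hkt]
    ring
  have ht_le : ∀ j : Fin d, j.val < k → t ≤ c j := fun j hj =>
    hle.trans (hmono _ _ (Fin.le_iff_val_le_val.mpr (by dsimp only; omega)))
  have hlt_t : ∀ j : Fin d, ¬ j.val < k → c j < t := fun j hj =>
    (hmono _ _ (Fin.le_iff_val_le_val.mpr (by dsimp only; omega))).trans_lt hlt
  have ht0 : 0 ≤ t := (hnonneg _).trans hlt.le
  refine ⟨fun j => ?_, hsum, fun _ => le_rfl, fun j => ?_, fun _ => zero_mul _,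
    fun j => ?_, fun j => ?_, fun j => ?_⟩ <;> dsimp only <;> split_ifs with hj
  · ring
  · ring
  · exact ht0
  · exact hnonneg j
  · exact sub_nonneg.mpr (ht_le j hj)
  · exact le_rfl
  · exact le_rfl
  · exact (hlt_t j hj).le
  · ring
  · ring
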